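/- Let k ≥ 1 and n = 2k + 1, and let B ⊆ ℤ^n be the subgroup generated by the 2k vectors 2(e_{2i−1} − e_{2i}) and 2(e_{2i−1} + e_{2i}) for 1 ≤ i ≤ k. Then the image of the set S = {x ∈ ℤ^n : x_i ∈ {−1, 1} for all i} under the quotient map ℤ^n → ℤ^n / B has exactly 2^{k+1} elements. -/

import Mathlib

/-! The subgroup `B` is cut out by congruences: on each coordinate pair `(2i, 2i+1)` it is the
lattice `{(a, b) | 4 ∣ a + b, 4 ∣ a - b}`, and it vanishes on the last coordinate. Hence two
`±1`-vectors are congruent modulo `B` exactly when they agree in the last coordinate and, on every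
pair, are either both constant or both non-constant. The classes are thus labelled by `k + 1`
independent bits, and every labelling occurs. -/

lemma Set.ncard_image_eq_of_eq_iff {α β γ : Type*} {f : α → β} {g : α → γ} {s : Set α}
    (h : ∀ x ∈ s, ∀ y ∈ s, f x = f y ↔ g x = g y) : (f '' s).ncard = (g '' s).ncard := by
  set p : α → β × γ := fun x => (f x, g x)
  have hfst : Set.InjOn Prod.fst (p '' s) := by
    rintro _ ⟨x, hx, rfl⟩ _ ⟨y, hy, rfl⟩ hxy
    exact Prod.ext hxy ((h x hx y hy).1 hxy)
  have hsnd : Set.InjOn Prod.snd (p '' s) := by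
    rintro _ ⟨x, hx, rfl⟩ _ ⟨y, hy, rfl⟩ hxy
    exact Prod.ext ((h x hx y hy).2 hxy) hxy
  calc (f '' s).ncard = (Prod.fst '' (p '' s)).ncard := by rw [Set.image_image]
    _ = (Prod.snd '' (p '' s)).ncard := hfst.ncard_image.trans hsnd.ncard_image.symm
    _ = (g '' s).ncard := by rw [Set.image_image]

namespace PretzelCosets

variable {k : ℕ}

def evenIdx (i : Fin k) : Fin (2 * k + 1) := ⟨2 * i, by omega⟩

def oddIdx (i : Fin k) : Fin (2 * k + 1) := ⟨2 * i + 1, by omega⟩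

@[simp] lemma evenIdx_inj {i i' : Fin k} : evenIdx i = evenIdx i' ↔ i = i' := by
  simp [evenIdx, Fin.ext_iff]

@[simp] lemma oddIdx_inj {i i' : Fin k} : oddIdx i = oddIdx i' ↔ i = i' := by
  simp [oddIdx, Fin.ext_iff]

@[simp] lemma evenIdx_ne_oddIdx (i i' : Fin k) : evenIdx i ≠ oddIdx i' := by
  simp [evenIdx, oddIdx, Fin.ext_iff]; omega

@[simp] lemma evenIdx_ne_last (i : Fin k) : evenIdx i ≠ Fin.last (2 * k) := by
  simp [evenIdx, Fin.ext_iff]; omega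

@[simp] lemma oddIdx_ne_last (i : Fin k) : oddIdx i ≠ Fin.last (2 * k) := by
  simp [oddIdx, Fin.ext_iff]; omega

lemma forall_pairs {P : Fin (2 * k + 1) → Prop} (heven : ∀ i, P (evenIdx i))
    (hodd : ∀ i, P (oddIdx i)) (hlast : P (Fin.last _)) : ∀ j, P j := by
  rintro ⟨j, hj⟩
  obtain hj' | hj' := Nat.lt_or_ge j (2 * k)
  · obtain ⟨m, rfl | rfl⟩ := Nat.even_or_odd' j
    · exact heven ⟨m, by omega⟩
    · exact hodd ⟨m, by omega⟩
  · obtain rfl : j = 2 * k := by omega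
    exact hlast

lemma funext_pairs {α : Type*} {x y : Fin (2 * k + 1) → α}
    (heven : ∀ i, x (evenIdx i) = y (evenIdx i)) (hodd : ∀ i, x (oddIdx i) = y (oddIdx i))
    (hlast : x (Fin.last _) = y (Fin.last _)) : x = y :=
  funext (forall_pairs heven hodd hlast)

def diffGen (i : Fin k) : Fin (2 * k + 1) → ℤ :=
  (2 : ℤ) • (Pi.single (evenIdx i) 1 - Pi.single (oddIdx i) 1)

def sumGen (i : Fin k) : Fin (2 * k + 1) → ℤ :=
  (2 : ℤ) • (Pi.single (evenIdx i) 1 + Pi.single (oddIdx i) 1)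

def pairLattice (k : ℕ) : AddSubgroup (Fin (2 * k + 1) → ℤ) where
  carrier := {d | d (Fin.last _) = 0 ∧
    ∀ i, 4 ∣ d (evenIdx i) + d (oddIdx i) ∧ 4 ∣ d (evenIdx i) - d (oddIdx i)}
  zero_mem' := by simp
  add_mem' := by
    rintro d e ⟨hd, hd'⟩ ⟨he, he'⟩
    refine ⟨by simp [hd, he], fun i => ?_⟩
    have := hd' i; have := he' i
    simp only [Pi.add_apply]
    omega
  neg_mem' := by
    rintro d ⟨hd, hd'⟩
    refine ⟨by simp [hd], fun i => ?_⟩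
    have := hd' i
    simp only [Pi.neg_apply]
    omega

lemma mem_pairLattice {d : Fin (2 * k + 1) → ℤ} : d ∈ pairLattice k ↔ d (Fin.last _) = 0 ∧
    ∀ i, 4 ∣ d (evenIdx i) + d (oddIdx i) ∧ 4 ∣ d (evenIdx i) - d (oddIdx i) := Iff.rfl

lemma closure_diffGen_sumGen_eq_pairLattice :
    AddSubgroup.closure (Set.range (diffGen (k := k)) ∪ Set.range sumGen) = pairLattice k := by
  apply le_antisymm
  · rw [AddSubgroup.closure_le]
    rintro _ (⟨i, rfl⟩ | ⟨i, rfl⟩) <;>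
      refine ⟨by simp [diffGen, sumGen], fun i' => ?_⟩ <;>
      by_cases h : i = i' <;> simp [diffGen, sumGen, h]
  · intro d ⟨hlast, hpair⟩
    have hd : d = ∑ i, (((d (evenIdx i) - d (oddIdx i)) / 4) • diffGen i +
        ((d (evenIdx i) + d (oddIdx i)) / 4) • sumGen i) := by
      refine funext_pairs (fun m => ?_) (fun m => ?_) ?_ <;>
        simp [Finset.sum_apply, diffGen, sumGen, Pi.single_apply, hlast, Finset.sum_add_distrib] <;>
        have := hpair m <;> omega
    rw [hd]
    refine AddSubgroup.sum_mem _ fun i _ => add_mem ?_ ?_ <;>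
      refine AddSubgroup.zsmul_mem _ (AddSubgroup.subset_closure ?_) _
    exacts [Or.inl ⟨i, rfl⟩, Or.inr ⟨i, rfl⟩]

def signVectors (n : ℕ) : Set (Fin n → ℤ) := {x | ∀ i, x i = 1 ∨ x i = -1}

def signBits (x : Fin (2 * k + 1) → ℤ) : (Fin k → Bool) × Bool :=
  (fun i => decide (x (evenIdx i) = x (oddIdx i)), decide (x (Fin.last _) = 1))

lemma neg_add_mem_pairLattice_iff {x y : Fin (2 * k + 1) → ℤ}
    (hx : x ∈ signVectors _) (hy : y ∈ signVectors _) :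
    -x + y ∈ pairLattice k ↔ signBits x = signBits y := by
  have hpair (i : Fin k) :
      (4 ∣ -x (evenIdx i) + y (evenIdx i) + (-x (oddIdx i) + y (oddIdx i)) ∧
        4 ∣ -x (evenIdx i) + y (evenIdx i) - (-x (oddIdx i) + y (oddIdx i))) ↔
      (x (evenIdx i) = x (oddIdx i) ↔ y (evenIdx i) = y (oddIdx i)) := by
    rcases hx (evenIdx i) with h1 | h1 <;> rcases hx (oddIdx i) with h2 | h2 <;>
      rcases hy (evenIdx i) with h3 | h3 <;> rcases hy (oddIdx i) with h4 | h4 <;>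
      simp only [h1, h2, h3, h4] <;> decide
  have hlast :
      -x (Fin.last _) + y (Fin.last _) = 0 ↔ (x (Fin.last _) = 1 ↔ y (Fin.last _) = 1) := by
    rcases hx (Fin.last _) with h1 | h1 <;> rcases hy (Fin.last _) with h2 | h2 <;>
      simp only [h1, h2] <;> decide
  simp only [mem_pairLattice, Pi.add_apply, Pi.neg_apply, hpair, hlast, signBits, Prod.ext_iff,
    funext_iff, decide_eq_decide]
  exact and_comm

lemma signBits_image_signVectors : signBits '' signVectors (2 * k + 1) = Set.univ := by
  refine Set.eq_univ_of_forall fun ⟨b, c⟩ => ?_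
  set x : Fin (2 * k + 1) → ℤ :=
    ∑ i, (Pi.single (evenIdx i) 1 + Pi.single (oddIdx i) (if b i then 1 else -1)) +
      Pi.single (Fin.last _) (if c then 1 else -1)
  have heven (m : Fin k) : x (evenIdx m) = 1 := by
    simp [x, Finset.sum_apply, Pi.single_apply, Finset.sum_add_distrib]
  have hodd (m : Fin k) : x (oddIdx m) = if b m then 1 else -1 := by
    simp [x, Finset.sum_apply, Pi.single_apply, Finset.sum_add_distrib]
  have hlast : x (Fin.last _) = if c then 1 else -1 := by
    simp [x, Finset.sum_apply, Finset.sum_add_distrib]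
  refine ⟨x, forall_pairs ?_ ?_ ?_, ?_⟩
  · simp [heven]
  · intro m; cases b m <;> simp [hodd]
  · cases c <;> simp [hlast]
  · ext m
    · cases h : b m <;> simp [signBits, heven, hodd, h]
    · cases c <;> simp [signBits, hlast]

end PretzelCosets

open PretzelCosets in
/-- Coset counting: for `n = 2k+1` and `B ⊆ ℤ^n` the subgroup generated by
`2(e_{2i−1} − e_{2i})` and `2(e_{2i−1} + e_{2i})`, the image of the set of
`±1`-vectors in `ℤ^n / B` has exactly `2^(k+1)` elements. -/
theorem stmt_5 (k : ℕ)
    (B : AddSubgroup (Fin (2 * k + 1) → ℤ))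
    (hB : B = AddSubgroup.closure
      ((Set.range fun i : Fin k =>
          (2 : ℤ) • (Pi.single (⟨2 * (i : ℕ), by have := i.isLt; omega⟩ : Fin (2 * k + 1)) (1 : ℤ)
            - Pi.single (⟨2 * (i : ℕ) + 1, by have := i.isLt; omega⟩ : Fin (2 * k + 1)) (1 : ℤ))) ∪
        (Set.range fun i : Fin k =>
          (2 : ℤ) • (Pi.single (⟨2 * (i : ℕ), by have := i.isLt; omega⟩ : Fin (2 * k + 1)) (1 : ℤ)
            + Pi.single (⟨2 * (i : ℕ) + 1, by have := i.isLt; omega⟩ : Fin (2 * k + 1)) (1 : ℤ))))) :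
    Set.ncard
      ((fun x : Fin (2 * k + 1) → ℤ => (QuotientAddGroup.mk x : (Fin (2 * k + 1) → ℤ) ⧸ B)) ''
        {x : Fin (2 * k + 1) → ℤ | ∀ i, x i = 1 ∨ x i = -1}) = 2 ^ (k + 1) := by
  obtain rfl : B = pairLattice k := hB.trans closure_diffGen_sumGen_eq_pairLattice
  calc _ = (signBits '' signVectors (2 * k + 1)).ncard :=
        Set.ncard_image_eq_of_eq_iff fun x hx y hy =>
          QuotientAddGroup.eq.trans (neg_add_mem_pairLattice_iff hx hy)
    _ = 2 ^ (k + 1) := by simp [signBits_image_signVectors, pow_succ]
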